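/- arXiv:1104.1906 — 5 statements merged into one kernel-verified Lean document; each statement's English description precedes it below -/
import Mathlib

section
/- For all positive integers ℓ and n, with L = lcm(ℓ,n), one has (1/L) · Σ_{k=1}^{L} c_ℓ(k)·c_n(k) = φ(n) if ℓ = n, and 0 otherwise. -/
/-!
Expanding both Ramanujan sums and summing over `k` first, a pair of divisors `d ∣ ℓ`, `e ∣ n`
contributes `d · e · (L / lcm(d, e)) = L · gcd(d, e)`, so the mean value is
`∑_{d ∣ ℓ, e ∣ n} gcd(d, e) μ(ℓ/d) μ(n/e)`. Since `gcd(d, e) = ∑_{t ∣ d, t ∣ e} φ(t)`,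
Möbius inversion in `d` gives `∑_{d ∣ ℓ} μ(ℓ/d) gcd(d, e) = [ℓ ∣ e] φ(ℓ)`, and since
`[ℓ ∣ e] = ∑_{t ∣ e} [t = ℓ]`, a second inversion in `e` leaves `[ℓ = n] φ(ℓ)`.
-/

open Finset ArithmeticFunction
open scoped ArithmeticFunction.Moebius

/-- The Ramanujan sum `c_n(k) = ∑_{d ∣ gcd(k,n)} d · μ(n/d)`, for integer `k`. -/
def ramanujanSum (n : ℕ) (k : ℤ) : ℤ :=
  ∑ d ∈ (Int.gcd k n).divisors, (d : ℤ) * μ (n / d)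

theorem Nat.filter_dvd_divisors_eq_divisors_gcd {m k : ℕ} (hm : m ≠ 0) :
    {d ∈ m.divisors | d ∣ k} = (Nat.gcd m k).divisors := by
  rw [← Nat.divisors_filter_dvd_of_dvd hm (Nat.gcd_dvd_left m k)]
  exact filter_congr fun d hd => by
    rw [Nat.dvd_gcd_iff, and_iff_right (Nat.dvd_of_mem_divisors hd)]

theorem Nat.div_lcm_mul_mul_eq {d e M : ℕ} (h : Nat.lcm d e ∣ M) :
    M / Nat.lcm d e * (d * e) = Nat.gcd d e * M := by
  rw [← Nat.gcd_mul_lcm d e, mul_left_comm, Nat.div_mul_cancel h]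

theorem Nat.Icc_one_filter_dvd_card_eq_div (M m : ℕ) : #{k ∈ Icc 1 M | m ∣ k} = M / m :=
  Nat.Ioc_filter_dvd_card_eq_div M m

theorem sum_divisors_moebius_mul_of_sum_divisors_eq {R : Type*} [Ring R] {f g : ℕ → R}
    (h : ∀ n > 0, ∑ i ∈ n.divisors, f i = g n) {n : ℕ} (hn : 0 < n) :
    ∑ d ∈ n.divisors, (μ (n / d) : R) * g d = f n := by
  rw [← sum_eq_iff_sum_mul_moebius_eq.mp h n hn,
    Nat.sum_divisorsAntidiagonal' (f := fun a b => (μ a : R) * g b)]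

theorem sum_divisors_moebius_mul_ite_dvd {R : Type*} [Ring R] (t : ℕ) {n : ℕ} (hn : 0 < n) :
    ∑ d ∈ n.divisors, (μ (n / d) : R) * (if t ∣ d then 1 else 0) =
      if n = t then 1 else 0 := by
  refine sum_divisors_moebius_mul_of_sum_divisors_eq (f := fun m => if m = t then 1 else 0)
    (g := fun m => if t ∣ m then 1 else 0) (fun m hm => ?_) hn
  simp [Finset.sum_ite_eq', hm.ne']

theorem sum_divisors_moebius_mul_gcd {R : Type*} [Ring R] (e : ℕ) {n : ℕ} (hn : 0 < n) :
    ∑ d ∈ n.divisors, (μ (n / d) : R) * (Nat.gcd d e : R) =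
      if n ∣ e then (Nat.totient n : R) else 0 := by
  refine sum_divisors_moebius_mul_of_sum_divisors_eq
    (f := fun m => if m ∣ e then (Nat.totient m : R) else 0)
    (g := fun m => (Nat.gcd m e : R)) (fun m hm => ?_) hn
  rw [← Finset.sum_filter, ← Nat.cast_sum, Nat.filter_dvd_divisors_eq_divisors_gcd hm.ne',
    Nat.sum_totient]

theorem sum_divisors_sum_divisors_gcd_mul_moebius_mul_moebius {R : Type*} [CommRing R]
    {l n : ℕ} (hl : 0 < l) (hn : 0 < n) :
    ∑ d ∈ l.divisors, ∑ e ∈ n.divisors, (Nat.gcd d e : R) * ((μ (l / d) : R) * μ (n / e)) =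
      if l = n then (Nat.totient n : R) else 0 := by
  calc _ = ∑ e ∈ n.divisors,
        (μ (n / e) : R) * ∑ d ∈ l.divisors, (μ (l / d) : R) * Nat.gcd d e := by
        rw [sum_comm]
        simp_rw [mul_sum]
        exact sum_congr rfl fun _ _ => sum_congr rfl fun _ _ => by ring
    _ = Nat.totient l * ∑ e ∈ n.divisors, (μ (n / e) : R) * (if l ∣ e then 1 else 0) := by
        rw [mul_sum]
        exact sum_congr rfl fun e _ => by
          rw [sum_divisors_moebius_mul_gcd e hl]
          split_ifs <;> ring
    _ = _ := by
        rw [sum_divisors_moebius_mul_ite_dvd _ hn]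
        obtain rfl | h := eq_or_ne l n
        · simp
        · simp [h, h.symm]

theorem ramanujanSum_natCast {n : ℕ} (hn : n ≠ 0) (k : ℕ) :
    ramanujanSum n k = ∑ d ∈ n.divisors, if d ∣ k then (d : ℤ) * μ (n / d) else 0 := by
  rw [ramanujanSum, ← sum_filter, Nat.filter_dvd_divisors_eq_divisors_gcd hn,
    Int.gcd_natCast_natCast, Nat.gcd_comm]

theorem sum_Icc_ramanujanSum_mul_ramanujanSum {l n M : ℕ} (hl : 0 < l) (hn : 0 < n)
    (hlM : l ∣ M) (hnM : n ∣ M) :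
    ∑ k ∈ Icc 1 M, ramanujanSum l k * ramanujanSum n k =
      M * ∑ d ∈ l.divisors, ∑ e ∈ n.divisors,
        (Nat.gcd d e : ℤ) * (μ (l / d) * μ (n / e)) := by
  calc _ = ∑ k ∈ Icc 1 M, ∑ d ∈ l.divisors, ∑ e ∈ n.divisors,
        if Nat.lcm d e ∣ k then (d : ℤ) * μ (l / d) * (e * μ (n / e)) else 0 := by
        refine sum_congr rfl fun k _ => ?_
        simp_rw [ramanujanSum_natCast hl.ne', ramanujanSum_natCast hn.ne', sum_mul_sum,
          ite_zero_mul_ite_zero, Nat.lcm_dvd_iff]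
    _ = ∑ d ∈ l.divisors, ∑ e ∈ n.divisors,
        ((M / Nat.lcm d e : ℕ) : ℤ) * (d * μ (l / d) * (e * μ (n / e))) := by
        rw [sum_comm]
        refine sum_congr rfl fun d _ => ?_
        rw [sum_comm]
        refine sum_congr rfl fun e _ => ?_
        rw [← sum_filter, sum_const, Nat.Icc_one_filter_dvd_card_eq_div, nsmul_eq_mul]
    _ = ∑ d ∈ l.divisors, ∑ e ∈ n.divisors,
        (M : ℤ) * (Nat.gcd d e * (μ (l / d) * μ (n / e))) := by
        refine sum_congr rfl fun d hd => sum_congr rfl fun e he => ?_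
        have hlcm : Nat.lcm d e ∣ M := Nat.lcm_dvd
          ((Nat.dvd_of_mem_divisors hd).trans hlM) ((Nat.dvd_of_mem_divisors he).trans hnM)
        have : ((M / Nat.lcm d e : ℕ) : ℤ) * (d * e) = Nat.gcd d e * M := by
          exact_mod_cast Nat.div_lcm_mul_mul_eq hlcm
        linear_combination (μ (l / d) * μ (n / e) : ℤ) * this
    _ = _ := by simp_rw [mul_sum]

theorem orthogonality_ramanujanSum (l n : ℕ) (hl : 0 < l) (hn : 0 < n) :
    (1 / (Nat.lcm l n : ℚ)) *
      ∑ k ∈ Icc 1 (Nat.lcm l n), (ramanujanSum l k : ℚ) * (ramanujanSum n k : ℚ) =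
      if l = n then (Nat.totient n : ℚ) else 0 := by
  have hL : (Nat.lcm l n : ℚ) ≠ 0 := by exact_mod_cast Nat.lcm_ne_zero hl.ne' hn.ne'
  have hsum := congrArg (Int.cast : ℤ → ℚ) <| sum_Icc_ramanujanSum_mul_ramanujanSum hl hn
    (Nat.dvd_lcm_left l n) (Nat.dvd_lcm_right l n)
  push_cast at hsum
  rw [hsum, sum_divisors_sum_divisors_gcd_mul_moebius_mul_moebius hl hn, one_div,
    inv_mul_cancel_left₀ hL]
end

section
/- For every positive integer n and every integer a, Σ_{1 ≤ k ≤ n, gcd(k,n)=1} c_n(k - a) = μ(n)·c_n(a). -/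
open Finset ArithmeticFunction
open scoped ArithmeticFunction.Moebius

/-! Let `z` be a primitive `n`-th root of unity. Detecting `gcd(j, n) = 1` by
`∑_{e ∣ gcd(j, n)} μ(e)` and summing complete geometric progressions of roots of unity gives the
exponential-sum form `c_n(m) = ∑_{1 ≤ j ≤ n, (j, n) = 1} z^{jm}`. Substituting it for `c_n(k - a)`
and exchanging the two sums over reduced residues gives `∑_j z^{-ja} c_n(j)`; as `c_n(j) = μ(n)`
for `j` coprime to `n`, this is `μ(n) c_n(-a) = μ(n) c_n(a)`. -/

open scoped ArithmeticFunction.zeta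

theorem sum_divisors_moebius {R : Type*} [Ring R] (g : ℕ) :
    ∑ e ∈ g.divisors, (μ e : R) = if g = 1 then 1 else 0 := by
  have h := congrArg (· g) (coe_moebius_mul_coe_zeta (R := R))
  simp only [coe_mul_zeta_apply, intCoe_apply, one_apply] at h
  exact h

theorem Nat.sum_Icc_filter_dvd {M : Type*} [AddCommMonoid M] (f : ℕ → M) (e n : ℕ) :
    ∑ j ∈ Icc 1 n with e ∣ j, f j = ∑ t ∈ Icc 1 (n / e), f (e * t) := by
  rcases Nat.eq_zero_or_pos e with rfl | he
  · rw [filter_false_of_mem fun j hj => by simp at hj ⊢; omega]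
    simp
  · symm
    refine sum_nbij' (e * ·) (· / e) (fun t ht => ?_) (fun j hj => ?_)
      (fun t _ => Nat.mul_div_cancel_left t he) (fun j hj => ?_) fun _ _ => rfl
    · simp only [mem_filter, mem_Icc, Nat.le_div_iff_mul_le he] at ht ⊢
      refine ⟨⟨?_, ?_⟩, dvd_mul_right _ _⟩ <;> nlinarith
    · obtain ⟨hj, t, rfl⟩ := mem_filter.mp hj
      rw [Nat.mul_div_cancel_left t he]
      simp only [mem_Icc, Nat.le_div_iff_mul_le he] at hj ⊢
      exact ⟨Nat.pos_of_mul_pos_left hj.1, by linarith⟩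
    · exact Nat.mul_div_cancel' (mem_filter.mp hj).2

theorem Nat.divisors_filter_intCast_dvd {n : ℕ} (hn : n ≠ 0) (m : ℤ) :
    n.divisors.filter (fun d : ℕ => (d : ℤ) ∣ m) = (Int.gcd m n).divisors := by
  ext d
  simp only [mem_filter, Nat.mem_divisors, Int.gcd, Int.natAbs_natCast, Nat.dvd_gcd_iff,
    Int.natCast_dvd, ne_eq, hn, Nat.gcd_ne_zero_right hn, not_false_eq_true, and_true]
  tauto

theorem IsPrimitiveRoot.sum_Icc_zpow_mul {K : Type*} [Field K] {w : K} {q : ℕ}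
    (hw : IsPrimitiveRoot w q) (m : ℤ) :
    ∑ t ∈ Icc 1 q, w ^ ((t : ℤ) * m) = if (q : ℤ) ∣ m then (q : K) else 0 := by
  have hpow (t : ℕ) : w ^ ((t : ℤ) * m) = (w ^ m) ^ t := by
    rw [mul_comm, zpow_mul, zpow_natCast]
  simp_rw [hpow]
  split_ifs with hqm
  · simp [(hw.zpow_eq_one_iff_dvd m).mpr hqm]
  · have hx : w ^ m ≠ 1 := mt (hw.zpow_eq_one_iff_dvd m).mp hqm
    have hxq : (w ^ m) ^ q = 1 := by
      rw [← zpow_natCast, ← zpow_mul, mul_comm, zpow_mul, zpow_natCast, hw.pow_eq_one, one_zpow]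
    rw [← Ico_add_one_right_eq_Icc, geom_sum_Ico hx (by omega), pow_succ, hxq, one_mul, pow_one,
      sub_self, zero_div]

theorem ramanujanSum_eq_sum_divisors (n : ℕ) (m : ℤ) :
    ramanujanSum n m =
      ∑ e ∈ n.divisors, if ((n / e : ℕ) : ℤ) ∣ m then μ e * (n / e : ℕ) else 0 := by
  rcases eq_or_ne n 0 with rfl | hn
  · simp [ramanujanSum]
  rw [ramanujanSum, ← Nat.divisors_filter_intCast_dvd hn, sum_filter, ← Nat.sum_div_divisors]
  refine sum_congr rfl fun e he => ?_
  rw [Nat.div_div_self (Nat.mem_divisors.mp he).1 hn, mul_comm]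

theorem IsPrimitiveRoot.sum_coprime_zpow_mul_eq_ramanujanSum {K : Type*} [Field K] {n : ℕ} {z : K}
    (hz : IsPrimitiveRoot z n) (m : ℤ) :
    ∑ j ∈ Icc 1 n with j.gcd n = 1, z ^ ((j : ℤ) * m) = ramanujanSum n m := by
  have hmoeb (j : ℕ) : (if j.gcd n = 1 then z ^ ((j : ℤ) * m) else 0) =
      ∑ e ∈ (j.gcd n).divisors, (μ e : K) * z ^ ((j : ℤ) * m) := by
    rw [← sum_mul, sum_divisors_moebius, ite_mul, one_mul, zero_mul]
  have hmultiples (e : ℕ) (he : e ∈ n.divisors) :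
      ∑ j ∈ Icc 1 n with e ∣ j, z ^ ((j : ℤ) * m) =
        if ((n / e : ℕ) : ℤ) ∣ m then ((n / e : ℕ) : K) else 0 := by
    obtain ⟨hen, hn⟩ := Nat.mem_divisors.mp he
    have hze : IsPrimitiveRoot (z ^ e) (n / e) :=
      hz.pow (Nat.pos_of_ne_zero hn) (Nat.mul_div_cancel' hen).symm
    rw [Nat.sum_Icc_filter_dvd, ← hze.sum_Icc_zpow_mul]
    refine sum_congr rfl fun t _ => ?_
    rw [← zpow_natCast, ← zpow_mul]
    congr 1
    push_cast
    ring
  calc ∑ j ∈ Icc 1 n with j.gcd n = 1, z ^ ((j : ℤ) * m)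
      = ∑ j ∈ Icc 1 n, ∑ e ∈ (j.gcd n).divisors, (μ e : K) * z ^ ((j : ℤ) * m) := by
        rw [sum_filter]
        exact sum_congr rfl fun j _ => hmoeb j
    _ = ∑ e ∈ n.divisors, (μ e : K) * ∑ j ∈ Icc 1 n with e ∣ j, z ^ ((j : ℤ) * m) := by
        simp_rw [mul_sum]
        refine sum_comm' fun j e => ?_
        simp only [mem_filter, Nat.mem_divisors, Nat.dvd_gcd_iff, mem_Icc, ne_eq,
          Nat.gcd_eq_zero_iff]
        grind
    _ = ramanujanSum n m := by
        rw [ramanujanSum_eq_sum_divisors, Int.cast_sum]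
        refine sum_congr rfl fun e he => ?_
        rw [hmultiples e he, mul_ite, mul_zero, apply_ite Int.cast, Int.cast_mul, Int.cast_natCast,
          Int.cast_zero]

theorem ramanujanSum_natCast_of_coprime {n j : ℕ} (h : j.gcd n = 1) :
    ramanujanSum n j = μ n := by
  simp [ramanujanSum, h]

theorem ramanujanSum_neg (n : ℕ) (m : ℤ) : ramanujanSum n (-m) = ramanujanSum n m := by
  rw [ramanujanSum, ramanujanSum, Int.neg_gcd]

theorem cohen_identity (n : ℕ) (hn : 0 < n) (a : ℤ) :
    ∑ k ∈ (Icc 1 n).filter (fun k => Nat.gcd k n = 1), ramanujanSum n ((k : ℤ) - a) =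
      μ n * ramanujanSum n a := by
  set S := (Icc 1 n).filter (fun k => Nat.gcd k n = 1)
  obtain ⟨z, hz⟩ : ∃ z : ℂ, IsPrimitiveRoot z n := ⟨_, Complex.isPrimitiveRoot_exp n hn.ne'⟩
  have hz0 : z ≠ 0 := hz.ne_zero hn.ne'
  apply Int.cast_injective (α := ℂ)
  push_cast
  calc ∑ k ∈ S, (ramanujanSum n (k - a) : ℂ)
      = ∑ k ∈ S, ∑ j ∈ S, z ^ ((j : ℤ) * (k - a)) :=
        sum_congr rfl fun k _ => (hz.sum_coprime_zpow_mul_eq_ramanujanSum _).symm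
    _ = ∑ j ∈ S, z ^ ((j : ℤ) * -a) * ∑ k ∈ S, z ^ ((k : ℤ) * j) := by
        rw [sum_comm]
        refine sum_congr rfl fun j _ => ?_
        rw [mul_sum]
        refine sum_congr rfl fun k _ => ?_
        rw [← zpow_add₀ hz0]
        congr 1
        ring
    _ = μ n * ∑ j ∈ S, z ^ ((j : ℤ) * -a) := by
        rw [mul_sum]
        refine sum_congr rfl fun j hj => ?_
        rw [hz.sum_coprime_zpow_mul_eq_ramanujanSum,
          ramanujanSum_natCast_of_coprime (mem_filter.mp hj).2, mul_comm]
    _ = μ n * ramanujanSum n a := by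
        rw [hz.sum_coprime_zpow_mul_eq_ramanujanSum, ramanujanSum_neg]
end

section
/- For every positive integers n and k, Σ_{d | n, gcd(d,k)=1} d·μ(n/d)/φ(d) = μ(n)·c_n(k)/φ(n) (the Brauer–Rademacher identity). -/
/-!
Write `f_k(d) = d / φ(d)` for `d` coprime to `k` (and `0` otherwise) and `g_k(d) = d` for
`d ∣ k` (and `0` otherwise), so that the left side is `(f_k * μ)(n)` and
`c_n(k) = (g_k * μ)(n)`. Both `f_k * μ` and `n ↦ μ(n) c_n(k) / φ(n)` are multiplicative, so it
suffices to compare them at prime powers `p ^ i`. At `p` this is a one-line computation in each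
of the cases `p ∣ k`, `p ∤ k`. For `i ≥ 2` the right side vanishes because
`μ(p ^ i) = 0`, and the left side is `f_k(p ^ i) - f_k(p ^ (i - 1)) = 0` because `d / φ(d)`
only depends on the primes dividing `d`.
-/

open Finset ArithmeticFunction
open scoped ArithmeticFunction.Moebius

theorem Nat.cast_totient_prime {R : Type*} [AddGroupWithOne R] {p : ℕ} (hp : p.Prime) :
    (p.totient : R) = p - 1 := by
  rw [Nat.totient_prime hp, Nat.cast_pred hp.pos]

theorem Nat.cast_div_totient_prime_pow_succ {K : Type*} [Field K] [CharZero K] {p : ℕ}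
    (hp : p.Prime) (j : ℕ) :
    ((p ^ (j + 1) : ℕ) : K) / (p ^ (j + 1)).totient = p / p.totient := by
  have hp0 : (p : K) ≠ 0 := by exact_mod_cast hp.ne_zero
  rw [Nat.totient_prime_pow_succ hp, ← Nat.totient_prime hp]
  push_cast
  field_simp
  ring

namespace ArithmeticFunction

theorem mul_moebius_apply_prime_pow_succ {R : Type*} [CommRing R] (f : ArithmeticFunction R)
    {p : ℕ} (hp : p.Prime) (i : ℕ) :
    (f * μ) (p ^ (i + 1)) = f (p ^ (i + 1)) - f (p ^ i) := by
  rw [mul_apply, Nat.sum_divisorsAntidiagonal (f · * (μ : ArithmeticFunction R) ·),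
    Nat.sum_divisors_prime_pow hp, sum_range_succ, sum_range_succ]
  have h_nonsquarefree :
      ∑ j ∈ range i, f (p ^ j) * (μ : ArithmeticFunction R) (p ^ (i + 1) / p ^ j) = 0 := by
    refine sum_eq_zero fun j hj => ?_
    rw [mem_range] at hj
    rw [intCoe_apply, Nat.pow_div (by omega) hp.pos, moebius_apply_prime_pow hp (by omega),
      if_neg (by omega), Int.cast_zero, mul_zero]
  rw [h_nonsquarefree, Nat.pow_div (by omega) hp.pos, Nat.pow_div le_rfl hp.pos]
  simp [moebius_apply_prime hp, sub_eq_neg_add]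

def totient : ArithmeticFunction ℕ :=
  ⟨Nat.totient, Nat.totient_zero⟩

@[simp]
theorem totient_apply (n : ℕ) : totient n = n.totient := rfl

theorem isMultiplicative_totient : totient.IsMultiplicative :=
  ⟨Nat.totient_one, fun h => Nat.totient_mul h⟩

end ArithmeticFunction

noncomputable def idDivTotientOfCoprime (k : ℕ) : ArithmeticFunction ℚ :=
  ⟨fun d => if d.Coprime k then d / d.totient else 0, by simp⟩

def idOfDvd (k : ℕ) : ArithmeticFunction ℕ :=
  ⟨fun d => if d ∣ k then d else 0, by simp⟩

@[simp]
theorem idDivTotientOfCoprime_apply (k d : ℕ) :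
    idDivTotientOfCoprime k d = if d.Coprime k then (d : ℚ) / d.totient else 0 := rfl

@[simp]
theorem idOfDvd_apply (k d : ℕ) : idOfDvd k d = if d ∣ k then d else 0 := rfl

theorem isMultiplicative_idDivTotientOfCoprime (k : ℕ) :
    (idDivTotientOfCoprime k).IsMultiplicative := by
  refine ⟨by simp, fun {m n} hmn => ?_⟩
  simp only [idDivTotientOfCoprime_apply, Nat.coprime_mul_iff_left, Nat.totient_mul hmn,
    ite_zero_mul_ite_zero, Nat.cast_mul, mul_div_mul_comm]

theorem isMultiplicative_idOfDvd (k : ℕ) : (idOfDvd k).IsMultiplicative := by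
  refine ⟨by simp, fun {m n} hmn => ?_⟩
  have hdvd : m * n ∣ k ↔ m ∣ k ∧ n ∣ k :=
    ⟨fun h => ⟨(dvd_mul_right m n).trans h, (dvd_mul_left n m).trans h⟩,
      fun ⟨hm, hn⟩ => hmn.mul_dvd_of_dvd_of_dvd hm hn⟩
  simp only [idOfDvd_apply, ite_zero_mul_ite_zero, hdvd]

theorem idDivTotientOfCoprime_apply_prime_pow_succ (k : ℕ) {p : ℕ} (hp : p.Prime) (j : ℕ) :
    idDivTotientOfCoprime k (p ^ (j + 1)) = idDivTotientOfCoprime k p := by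
  simp only [idDivTotientOfCoprime_apply, Nat.coprime_pow_left_iff j.succ_pos,
    Nat.cast_div_totient_prime_pow_succ hp]

theorem idDivTotientOfCoprime_mul_moebius_apply (n k : ℕ) :
    (idDivTotientOfCoprime k * μ) n =
      ∑ d ∈ n.divisors.filter (fun d => Nat.gcd d k = 1),
        (d : ℚ) * (μ (n / d) : ℚ) / (Nat.totient d : ℚ) := by
  rw [mul_apply, sum_filter,
    Nat.sum_divisorsAntidiagonal (idDivTotientOfCoprime k · * (μ : ArithmeticFunction ℚ) ·)]
  refine sum_congr rfl fun d _ => ?_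
  simp only [idDivTotientOfCoprime_apply, intCoe_apply, Nat.Coprime]
  split_ifs <;> ring

theorem ramanujanSum_eq_idOfDvd_mul_moebius_apply (n k : ℕ) :
    (ramanujanSum n k : ℚ) = ((idOfDvd k : ArithmeticFunction ℚ) * μ) n := by
  rcases n.eq_zero_or_pos with rfl | hn
  · simp [ramanujanSum]
  have h_divisors : (Int.gcd k n).divisors = n.divisors.filter (· ∣ k) := by
    ext d
    simp [Int.gcd_natCast_natCast, Nat.dvd_gcd_iff, hn.ne', and_comm]
  rw [ramanujanSum, h_divisors, sum_filter, mul_apply,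
    Nat.sum_divisorsAntidiagonal
      ((idOfDvd k : ArithmeticFunction ℚ) · * (μ : ArithmeticFunction ℚ) ·)]
  push_cast
  refine sum_congr rfl fun d _ => ?_
  simp only [natCoe_apply, idOfDvd_apply, intCoe_apply]
  split_ifs <;> simp

theorem idDivTotientOfCoprime_mul_moebius_apply_prime (k : ℕ) {p : ℕ} (hp : p.Prime) :
    (idDivTotientOfCoprime k * μ) p =
      μ p * ((idOfDvd k : ArithmeticFunction ℚ) * μ) p / p.totient := by
  rw [← pow_one p, mul_moebius_apply_prime_pow_succ _ hp, mul_moebius_apply_prime_pow_succ _ hp]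
  have hp1 : (p : ℚ) - 1 ≠ 0 := sub_ne_zero.2 (by exact_mod_cast hp.ne_one)
  by_cases hpk : p ∣ k
  · simp [hpk, hp.coprime_iff_not_dvd, moebius_apply_prime hp, Nat.cast_totient_prime hp]
    rw [← neg_sub, neg_div, div_self hp1]
  · simp [hpk, hp.coprime_iff_not_dvd, moebius_apply_prime hp, Nat.cast_totient_prime hp]
    field_simp
    ring

theorem idDivTotientOfCoprime_mul_moebius (k : ℕ) :
    idDivTotientOfCoprime k * μ =
      ((μ : ArithmeticFunction ℚ).pmul ((idOfDvd k : ArithmeticFunction ℚ) * μ)).pdiv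
        (totient : ArithmeticFunction ℚ) := by
  have hμ := isMultiplicative_moebius.intCast (R := ℚ)
  refine (IsMultiplicative.eq_iff_eq_on_prime_powers _
    ((isMultiplicative_idDivTotientOfCoprime k).mul hμ) _
    ((hμ.pmul ((isMultiplicative_idOfDvd k).natCast.mul hμ)).pdiv
      isMultiplicative_totient.natCast)).2 fun p i hp => ?_
  rw [pdiv_apply, pmul_apply, natCoe_apply, totient_apply, intCoe_apply]
  rcases i with _ | _ | j
  · simp
  · rw [zero_add, pow_one, idDivTotientOfCoprime_mul_moebius_apply_prime k hp]
  · rw [mul_moebius_apply_prime_pow_succ _ hp, idDivTotientOfCoprime_apply_prime_pow_succ k hp,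
      idDivTotientOfCoprime_apply_prime_pow_succ k hp, moebius_apply_prime_pow hp (by omega),
      if_neg (by omega)]
    simp

theorem brauer_rademacher_general (n k : ℕ) :
    ∑ d ∈ n.divisors.filter (fun d => Nat.gcd d k = 1),
        (d : ℚ) * (μ (n / d) : ℚ) / (Nat.totient d : ℚ) =
      (μ n : ℚ) * (ramanujanSum n (k : ℤ) : ℚ) / (Nat.totient n : ℚ) := by
  rw [← idDivTotientOfCoprime_mul_moebius_apply, idDivTotientOfCoprime_mul_moebius, pdiv_apply,
    pmul_apply, natCoe_apply, totient_apply, intCoe_apply,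
    ramanujanSum_eq_idOfDvd_mul_moebius_apply]

theorem brauer_rademacher (n k : ℕ) (hn : 0 < n) (hk : 0 < k) :
    ∑ d ∈ n.divisors.filter (fun d => Nat.gcd d k = 1),
        (d : ℚ) * (μ (n / d) : ℚ) / (Nat.totient d : ℚ) =
      (μ n : ℚ) * (ramanujanSum n (k : ℤ) : ℚ) / (Nat.totient n : ℚ) :=
  brauer_rademacher_general n k
end

section
/- For a single integer polynomial g and positive integer m, Σ_{1 ≤ k ≤ m, gcd(k,m)=1} c_m(g(k)) = φ(m)·Σ_{d | m} [d μ(m/d)/φ(d)]·η_g(d), where η_g(d) is the number of x mod d with g(x) ≡ 0 (mod d) and gcd(x,d)=1. -/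
open Finset ArithmeticFunction
open scoped ArithmeticFunction.Moebius

open Polynomial

/-
Expanding `c_m(g(k)) = ∑_{d ∣ gcd(g(k), m)} d μ(m/d)` and swapping the sums reduces the claim to
counting, for each `d ∣ m`, the units `k` mod `m` with `d ∣ g(k)`. That condition only depends on
the image of `k` in `(ℤ/d)ˣ`, and reduction `(ℤ/m)ˣ → (ℤ/d)ˣ` is a surjective homomorphism, so all
its fibres have `φ(m)/φ(d)` elements and the count is `φ(m)/φ(d) · η_g(d)`.
-/

lemma MonoidHom.card_filter_apply_mul_card_of_surjective {G M : Type*} [Group G] [Fintype G]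
    [Monoid M] [Fintype M] [DecidableEq M] (f : G →* M) (hf : Function.Surjective f)
    (p : M → Prop) [DecidablePred p] :
    #{g | p (f g)} * Fintype.card M = Fintype.card G * #{x | p x} := by
  have hfiber (t : Finset M) : #{g | f g ∈ t} = #t * #{g | f g = 1} := by
    rw [← sum_card_fiberwise_eq_card_filter, sum_const_nat]
    exact fun x _ ↦ card_fiber_eq_of_mem_range f (hf x) (hf 1)
  have hp := hfiber {x | p x}
  have huniv := hfiber univ
  simp only [mem_filter, mem_univ, true_and, filter_true] at hp huniv
  rw [hp, Fintype.card, ← card_univ (α := G), huniv]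
  ring

lemma card_filter_units_eq_card_filter_isUnit {M : Type*} [Monoid M] [Fintype M] [DecidableEq M]
    (p : M → Prop) [DecidablePred p] :
    #{u : Mˣ | p u} = #{x : M | IsUnit x ∧ p x} :=
  card_bij (fun u _ ↦ u.val) (by simp) (fun _ _ _ _ h ↦ Units.ext h)
    (by simp only [mem_filter, mem_univ, true_and]; rintro _ ⟨⟨u, rfl⟩, hp⟩; exact ⟨u, hp, rfl⟩)

lemma ZMod.card_filter_range_natCast (n : ℕ) [NeZero n] (p : ZMod n → Prop) [DecidablePred p] :
    #{k ∈ range n | p ((k : ℕ) : ZMod n)} = #{x : ZMod n | p x} :=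
  card_nbij' (fun k ↦ (k : ZMod n)) ZMod.val (fun k hk ↦ by simp_all)
    (fun x hx ↦ by simp_all [ZMod.val_lt])
    (fun k hk ↦ ZMod.val_cast_of_lt (by simp_all)) (fun x _ ↦ ZMod.natCast_zmod_val x)

lemma ZMod.card_filter_Icc_natCast (n : ℕ) [NeZero n] (p : ZMod n → Prop) [DecidablePred p] :
    #{k ∈ Icc 1 n | p ((k : ℕ) : ZMod n)} = #{x : ZMod n | p x} := by
  have hper : Function.Periodic (fun k : ℕ ↦ p k) n := fun k ↦ by simp
  rw [← ZMod.card_filter_range_natCast, ← Nat.count_eq_card_filter_range,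
    ← Nat.filter_Ico_card_eq_of_periodic 1 n _ hper, add_comm, Finset.Ico_add_one_right_eq_Icc]

lemma divisors_intGcd_natCast_eq_filter {m : ℕ} (hm : m ≠ 0) (n : ℤ) :
    (Int.gcd n m).divisors = {d ∈ m.divisors | ((d : ℕ) : ℤ) ∣ n} := by
  ext d
  simp [Int.gcd_eq_zero_iff, hm, ← Int.natCast_dvd_natCast, Int.coe_gcd, _root_.dvd_gcd_iff,
    and_comm]

lemma ramanujanSum_eq_sum_filter_dvd {m : ℕ} (hm : m ≠ 0) (n : ℤ) :
    ramanujanSum m n = ∑ d ∈ m.divisors with ((d : ℕ) : ℤ) ∣ n, (d : ℤ) * μ (m / d) := by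
  rw [ramanujanSum, divisors_intGcd_natCast_eq_filter hm]

lemma sum_ramanujanSum_eq {ι : Type*} {m : ℕ} (hm : m ≠ 0) (s : Finset ι) (f : ι → ℤ) :
    ∑ k ∈ s, ramanujanSum m (f k) =
      ∑ d ∈ m.divisors, (d : ℤ) * μ (m / d) * #{k ∈ s | ((d : ℕ) : ℤ) ∣ f k} := by
  simp_rw [ramanujanSum_eq_sum_filter_dvd hm, sum_filter]
  rw [sum_comm]
  refine sum_congr rfl fun d _ ↦ ?_
  rw [← sum_filter, sum_const, nsmul_eq_mul, mul_comm]

lemma Polynomial.intCast_dvd_eval_iff (g : ℤ[X]) (d : ℕ) (a : ℤ) :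
    (d : ℤ) ∣ g.eval a ↔ (g.map (Int.castRingHom (ZMod d))).eval (a : ZMod d) = 0 := by
  rw [eval_intCast_map, eq_intCast, ZMod.intCast_zmod_eq_zero_iff_dvd, Int.cast_id]

theorem card_coprime_dvd_eval_mul_totient (g : ℤ[X]) {m d : ℕ} [NeZero m] (hd : d ∣ m) :
    #{k ∈ Icc 1 m | Nat.gcd k m = 1 ∧ (d : ℤ) ∣ g.eval (k : ℤ)} * d.totient =
      m.totient * #{x ∈ range d | (d : ℤ) ∣ g.eval ((x : ℕ) : ℤ) ∧ Nat.gcd x d = 1} := by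
  have : NeZero d := ⟨ne_zero_of_dvd_ne_zero (NeZero.ne m) hd⟩
  set gd := g.map (Int.castRingHom (ZMod d))
  have hcount_m : #{k ∈ Icc 1 m | Nat.gcd k m = 1 ∧ (d : ℤ) ∣ g.eval (k : ℤ)} =
      #{u : (ZMod m)ˣ | gd.eval (ZMod.castHom hd (ZMod d) u) = 0} := by
    rw [card_filter_units_eq_card_filter_isUnit (fun x ↦ gd.eval (ZMod.castHom hd (ZMod d) x) = 0),
      ← ZMod.card_filter_Icc_natCast]
    simp [ZMod.isUnit_iff_coprime, g.intCast_dvd_eval_iff, gd]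
  have hcount_d : #{x ∈ range d | (d : ℤ) ∣ g.eval ((x : ℕ) : ℤ) ∧ Nat.gcd x d = 1} =
      #{v : (ZMod d)ˣ | gd.eval (v : ZMod d) = 0} := by
    rw [card_filter_units_eq_card_filter_isUnit (fun x ↦ gd.eval x = 0),
      ← ZMod.card_filter_range_natCast]
    simp [ZMod.isUnit_iff_coprime, g.intCast_dvd_eval_iff, gd, and_comm]
  rw [hcount_m, hcount_d, ← ZMod.card_units_eq_totient, ← ZMod.card_units_eq_totient]
  exact (ZMod.unitsMap hd).card_filter_apply_mul_card_of_surjective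
    (ZMod.unitsMap_surjective hd) (fun v ↦ gd.eval (v : ZMod d) = 0)

theorem eval_R_g (g : Polynomial ℤ) (m : ℕ) (hm : 0 < m) :
    ∑ k ∈ (Icc 1 m).filter (fun k => Nat.gcd k m = 1),
      (ramanujanSum m (g.eval (k : ℤ)) : ℚ) =
    (Nat.totient m : ℚ) *
      ∑ d ∈ m.divisors,
        (d : ℚ) * (μ (m / d) : ℚ) / (Nat.totient d : ℚ) *
          (((Finset.range d).filter
            (fun x : ℕ => (d : ℤ) ∣ g.eval (x : ℤ) ∧ Nat.gcd x d = 1)).card : ℚ) := by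
  have : NeZero m := ⟨hm.ne'⟩
  rw [← Int.cast_sum, sum_ramanujanSum_eq hm.ne', mul_sum]
  push_cast
  refine sum_congr rfl fun d hd ↦ ?_
  have htot : (d.totient : ℚ) ≠ 0 := by
    exact_mod_cast (Nat.totient_pos.2 (Nat.pos_of_mem_divisors hd)).ne'
  have hcount := congrArg (Nat.cast : ℕ → ℚ)
    (card_coprime_dvd_eval_mul_totient g (Nat.dvd_of_mem_divisors hd))
  push_cast at hcount
  rw [filter_filter, (eq_div_iff htot).2 hcount]
  field_simp
end

section
/- If m_1,…,m_r are pairwise relatively prime positive integers with m = m_1···m_r, and a_1,…,a_r ∈ ℤ, then Σ_{1 ≤ k ≤ m, gcd(k,m)=1} c_{m_1}(k−a_1)···c_{m_r}(k−a_r) = μ(m)·c_{m_1}(a_1)···c_{m_r}(a_r). -/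
open Finset ArithmeticFunction
open scoped ArithmeticFunction.Moebius

/-! The `i`-th factor of the summand depends only on `k` modulo `mᵢ`, so by the Chinese remainder
theorem the sum over the reduced residues modulo `m = ∏ mᵢ` is the product of the sums
`∑_{(k, mᵢ) = 1} c_{mᵢ}(k - aᵢ)`. Each of these equals `μ(mᵢ) c_{mᵢ}(aᵢ)`: as `n ↦ c_n(a)` is the
multiplicative function `(d ↦ d · [d ∣ a]) * μ`, the same splitting reduces this to a prime power
`p^(e+1)`, where `c_{p^(e+1)}(x) = p^(e+1) [p^(e+1) ∣ x] - p^e [p^e ∣ x]` and the sum becomes a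
count of the residues prime to `p` in a class modulo `p^(e+1)` or `p^e`. -/

open scoped Function

theorem Function.Periodic.sum_Icc_one_eq_sum_range {M : Type*} [AddCommMonoid M] {g : ℕ → M}
    {n : ℕ} (hg : Function.Periodic g n) : ∑ k ∈ Icc 1 n, g k = ∑ k ∈ range n, g k := by
  cases n with
  | zero => simp
  | succ n =>
    rw [← Finset.Ico_add_one_right_eq_Icc, sum_Ico_eq_sum_range, add_tsub_cancel_right,
      sum_range_succ, sum_range_succ' g, ← hg 0, zero_add]
    simp only [add_comm]

theorem card_filter_range_dvd_sub {N q : ℕ} [NeZero q] (hq : q ∣ N) (a : ℤ) :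
    #{k ∈ range N | (q : ℤ) ∣ ((k : ℕ) : ℤ) - a} = N / q := by
  have hmod (k : ℕ) : (q : ℤ) ∣ k - a ↔ k ≡ (a : ZMod q).val [MOD q] := by
    rw [← ZMod.natCast_eq_natCast_iff, ZMod.natCast_zmod_val, ← ZMod.intCast_eq_intCast_iff_dvd_sub,
      Int.cast_natCast, eq_comm]
  rw [filter_congr fun k _ => hmod k, ← Nat.count_eq_card_filter_range,
    Nat.count_modEq_card _ (NeZero.pos q), Nat.mod_eq_zero_of_dvd hq]
  simp

theorem card_filter_coprime_dvd_sub {p e j : ℕ} (hp : p.Prime) (hj : j ≠ 0) (hje : j ≤ e) (a : ℤ) :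
    #{k ∈ range (p ^ e) | Nat.gcd k (p ^ e) = 1 ∧ ((p ^ j : ℕ) : ℤ) ∣ (k : ℤ) - a} =
      if (p : ℤ) ∣ a then 0 else p ^ (e - j) := by
  have : NeZero (p ^ j) := ⟨pow_ne_zero j hp.ne_zero⟩
  have hcop {k : ℕ} (hk : ((p ^ j : ℕ) : ℤ) ∣ (k : ℤ) - a) :
      Nat.gcd k (p ^ e) = 1 ↔ ¬ (p : ℤ) ∣ a := by
    have hpk : (p : ℤ) ∣ k ↔ (p : ℤ) ∣ a :=
      Int.dvd_iff_dvd_of_dvd_sub ((Int.natCast_dvd_natCast.2 (dvd_pow_self p hj)).trans hk)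
    rw [← Nat.Coprime, Nat.coprime_pow_right_iff (by omega), Nat.coprime_comm,
      hp.coprime_iff_not_dvd, ← hpk, Int.natCast_dvd_natCast]
  split_ifs with hpa
  · exact card_eq_zero.2 (filter_eq_empty_iff.2 fun k _ ⟨hk1, hk2⟩ => (hcop hk2).1 hk1 hpa)
  · rw [filter_congr fun k _ => and_iff_right_of_imp fun hk => (hcop hk).2 hpa,
      card_filter_range_dvd_sub (pow_dvd_pow p hje), Nat.pow_div hje hp.pos]

theorem card_filter_coprime_prime {p : ℕ} (hp : p.Prime) :
    #{k ∈ range p | Nat.gcd k p = 1} = p - 1 := by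
  rw [← Nat.totient_prime hp, Nat.totient_eq_card_coprime]
  simp only [Nat.coprime_comm (n := p)]

theorem sum_filter_coprime_Icc_eq_sum_units {M : Type*} [AddCommMonoid M] {n : ℕ} [NeZero n]
    (g : ZMod n → M) :
    ∑ k ∈ (Icc 1 n).filter (fun k => Nat.gcd k n = 1), g k = ∑ u : (ZMod n)ˣ, g u := by
  -- the representative of `u` in `[1, n]` is `(u - 1).val + 1`
  refine sum_bij' (fun k hk => ZMod.unitOfCoprime k (mem_filter.1 hk).2)
    (fun u _ => ((u : ZMod n) - 1).val + 1) (fun _ _ => mem_univ _) (fun u _ => ?_) (fun k hk => ?_)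
    (fun u _ => ?_) (fun _ _ => rfl)
  · have hcast : ((((u : ZMod n) - 1).val + 1 : ℕ) : ZMod n) = u := by simp
    refine mem_filter.2 ⟨mem_Icc.2 ⟨by omega, ZMod.val_lt _⟩, ?_⟩
    exact (ZMod.isUnit_iff_coprime _ n).1 (by rw [hcast]; exact u.isUnit)
  · obtain ⟨hk1, hkn⟩ := mem_Icc.1 (mem_filter.1 hk).1
    rw [ZMod.coe_unitOfCoprime, ← Nat.cast_pred hk1, ZMod.val_natCast, Nat.mod_eq_of_lt (by omega)]
    omega
  · ext
    simp

theorem sum_filter_coprime_Icc_prod_eq_prod_sum {ι R : Type*} [Fintype ι] [CommSemiring R]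
    {m : ι → ℕ} (hm : Pairwise (Nat.Coprime on m)) {f : ι → ℕ → R}
    (hf : ∀ i, Function.Periodic (f i) (m i)) :
    ∑ k ∈ (Icc 1 (∏ i, m i)).filter (fun k => Nat.gcd k (∏ i, m i) = 1), ∏ i, f i k =
      ∏ i, ∑ k ∈ (Icc 1 (m i)).filter (fun k => Nat.gcd k (m i) = 1), f i k := by
  classical
  by_cases h0 : ∃ i, m i = 0
  · obtain ⟨i, hi⟩ := h0
    rw [prod_eq_zero_iff.2 ⟨i, mem_univ i, hi⟩, prod_eq_zero (mem_univ i) (by simp [hi])]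
    simp
  push Not at h0
  have (i : ι) : NeZero (m i) := ⟨h0 i⟩
  have : NeZero (∏ i, m i) := ⟨prod_ne_zero_iff.2 fun i _ => h0 i⟩
  let e := ZMod.prodEquivPi m hm
  calc _ = ∑ u : (ZMod (∏ i, m i))ˣ, ∏ i, f i (e u i).val := by
        rw [← sum_filter_coprime_Icc_eq_sum_units fun x => ∏ i, f i (e x i).val]
        simp [e, (hf _).map_mod_nat]
    _ = ∑ v : Π i, (ZMod (m i))ˣ, ∏ i, f i (v i : ZMod (m i)).val :=
        Fintype.sum_equiv ((Units.mapEquiv e.toMulEquiv).trans MulEquiv.piUnits).toEquiv _ _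
          fun _ => rfl
    _ = ∏ i, ∑ w : (ZMod (m i))ˣ, f i (w : ZMod (m i)).val :=
        (Fintype.prod_sum fun i (w : (ZMod (m i))ˣ) => f i (w : ZMod (m i)).val).symm
    _ = _ := by
        refine prod_congr rfl fun i _ => ?_
        rw [← sum_filter_coprime_Icc_eq_sum_units fun x => f i x.val]
        simp [(hf i).map_mod_nat]

theorem ArithmeticFunction.IsMultiplicative.map_prod_of_pairwise {R ι : Type*}
    [CommMonoidWithZero R] [Fintype ι] {f : ArithmeticFunction R} (hf : f.IsMultiplicative)
    {g : ι → ℕ} (hg : Pairwise (Nat.Coprime on g)) : f (∏ i, g i) = ∏ i, f (g i) :=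
  hf.map_prod g univ (by simpa [Set.pairwise_univ] using hg)

theorem mul_moebius_apply_prime_pow_succ (f : ArithmeticFunction ℤ) {p : ℕ} (hp : p.Prime)
    (e : ℕ) : (f * μ) (p ^ (e + 1)) = f (p ^ (e + 1)) - f (p ^ e) := by
  rw [mul_apply, Nat.sum_divisorsAntidiagonal (fun d e => f d * μ e), Nat.sum_divisors_prime_pow hp,
    sum_range_succ, sum_range_succ, sum_eq_zero fun i hi => ?_]
  · simp [Nat.pow_div, hp.pos, moebius_apply_prime hp]
    ring
  · have hi : i < e := mem_range.1 hi
    rw [Nat.pow_div (by omega) hp.pos, moebius_apply_prime_pow hp (by omega), if_neg (by omega),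
      mul_zero]

theorem ramanujanSum_periodic (n : ℕ) : Function.Periodic (ramanujanSum n) n := fun k => by
  simp only [ramanujanSum, Int.gcd_add_self_left]

theorem ramanujanSum_natCast_sub_periodic (n : ℕ) (a : ℤ) :
    Function.Periodic (fun k : ℕ => ramanujanSum n (k - a)) n := fun k => by
  simpa only [Nat.cast_add, add_sub_right_comm] using ramanujanSum_periodic n (k - a)

def idDvd (k : ℤ) : ArithmeticFunction ℤ :=
  ⟨fun d => if (d : ℤ) ∣ k then d else 0, by simp⟩

theorem idDvd_apply (k : ℤ) (d : ℕ) : idDvd k d = if (d : ℤ) ∣ k then (d : ℤ) else 0 := rfl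

theorem isMultiplicative_idDvd (k : ℤ) : (idDvd k).IsMultiplicative := by
  refine ⟨by simp [idDvd_apply], fun {m n} hmn => ?_⟩
  have hdvd : ((m * n : ℕ) : ℤ) ∣ k ↔ (m : ℤ) ∣ k ∧ (n : ℤ) ∣ k := by
    simp only [Int.natCast_dvd]
    exact ⟨fun h => ⟨(dvd_mul_right m n).trans h, (dvd_mul_left n m).trans h⟩,
      fun ⟨hm, hn⟩ => hmn.mul_dvd_of_dvd_of_dvd hm hn⟩
  simp only [idDvd_apply, hdvd]
  split_ifs <;> simp_all

theorem ramanujanSum_eq_idDvd_mul_moebius (n : ℕ) (k : ℤ) :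
    ramanujanSum n k = (idDvd k * μ) n := by
  rcases eq_or_ne n 0 with rfl | hn
  · simp [ramanujanSum]
  have hgcd : Int.gcd k n ∣ n := Int.natCast_dvd_natCast.mp (Int.gcd_dvd_right _ _)
  rw [ramanujanSum, ← Nat.divisors_filter_dvd_of_dvd hn hgcd, sum_filter, mul_apply,
    Nat.sum_divisorsAntidiagonal (fun d e => idDvd k d * μ e)]
  refine sum_congr rfl fun d hd => ?_
  have hdk : d ∣ Int.gcd k n ↔ (d : ℤ) ∣ k := by
    rw [Int.gcd, Nat.dvd_gcd_iff, Int.natCast_dvd]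
    simp [Nat.dvd_of_mem_divisors hd]
  simp only [hdk, idDvd_apply]
  split_ifs <;> simp

theorem ramanujanSum_prod {ι : Type*} [Fintype ι] {g : ι → ℕ} (hg : Pairwise (Nat.Coprime on g))
    (k : ℤ) : ramanujanSum (∏ i, g i) k = ∏ i, ramanujanSum (g i) k := by
  simp only [ramanujanSum_eq_idDvd_mul_moebius,
    ((isMultiplicative_idDvd k).mul isMultiplicative_moebius).map_prod_of_pairwise hg]

theorem ramanujanSum_prime_pow_succ {p : ℕ} (hp : p.Prime) (e : ℕ) (k : ℤ) :
    ramanujanSum (p ^ (e + 1)) k =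
      (if ((p ^ (e + 1) : ℕ) : ℤ) ∣ k then ((p ^ (e + 1) : ℕ) : ℤ) else 0) -
        if ((p ^ e : ℕ) : ℤ) ∣ k then ((p ^ e : ℕ) : ℤ) else 0 := by
  rw [ramanujanSum_eq_idDvd_mul_moebius, mul_moebius_apply_prime_pow_succ _ hp, idDvd_apply,
    idDvd_apply]

theorem sum_filter_coprime_ramanujanSum_sub_prime_pow {p : ℕ} (hp : p.Prime) (e : ℕ) (a : ℤ) :
    ∑ k ∈ (Icc 1 (p ^ (e + 1))).filter (fun k => Nat.gcd k (p ^ (e + 1)) = 1),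
      ramanujanSum (p ^ (e + 1)) (k - a) = μ (p ^ (e + 1)) * ramanujanSum (p ^ (e + 1)) a := by
  have hperiodic : Function.Periodic (fun k => if Nat.gcd k (p ^ (e + 1)) = 1 then
      ramanujanSum (p ^ (e + 1)) (k - a) else 0) (p ^ (e + 1)) := fun k => by
    simp only [Nat.gcd_add_self_left, ramanujanSum_natCast_sub_periodic _ a k]
  rw [sum_filter, hperiodic.sum_Icc_one_eq_sum_range, ← sum_filter]
  simp only [ramanujanSum_prime_pow_succ hp, sum_sub_distrib, ← sum_filter, sum_const,
    filter_filter, nsmul_eq_mul]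
  rcases e with _ | e
  · simp only [zero_add, pow_zero, Nat.cast_one, one_dvd, and_true]
    rw [card_filter_coprime_dvd_sub hp one_ne_zero le_rfl]
    simp only [pow_one, card_filter_coprime_prime hp, moebius_apply_prime hp]
    split_ifs <;> push_cast [hp.one_le] <;> ring
  · rw [card_filter_coprime_dvd_sub hp (by omega) le_rfl,
      card_filter_coprime_dvd_sub hp (by omega) (by omega), moebius_apply_prime_pow hp (by omega),
      if_neg (show e + 1 + 1 ≠ 1 by omega), zero_mul]
    split_ifs <;> simp [pow_succ, mul_comm]

theorem sum_filter_coprime_ramanujanSum_sub (n : ℕ) (a : ℤ) :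
    ∑ k ∈ (Icc 1 n).filter (fun k => Nat.gcd k n = 1), ramanujanSum n (k - a) =
      μ n * ramanujanSum n a := by
  rcases eq_or_ne n 0 with rfl | hn
  · simp
  obtain ⟨q, hq, hprod, hpow⟩ : ∃ q : n.primeFactors → ℕ, Pairwise (Nat.Coprime on q) ∧
      ∏ p, q p = n ∧ ∀ p, ∃ e, q p = (p : ℕ) ^ (e + 1) := by
    refine ⟨fun p => p ^ n.factorization p, Nat.pairwise_coprime_pow_primeFactors_factorization,
      (Nat.prod_primeFactors_coe_pow_factorization hn).symm, fun p => ?_⟩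
    obtain ⟨hp, hpn, -⟩ := Nat.mem_primeFactors.1 p.2
    exact ⟨n.factorization p - 1, by rw [Nat.sub_add_cancel (hp.factorization_pos_of_dvd hn hpn)]⟩
  have hq_prime_pow (p : n.primeFactors) :
      ∑ k ∈ (Icc 1 (q p)).filter (fun k => Nat.gcd k (q p) = 1), ramanujanSum (q p) (k - a) =
        μ (q p) * ramanujanSum (q p) a := by
    obtain ⟨e, he⟩ := hpow p
    rw [he]
    exact sum_filter_coprime_ramanujanSum_sub_prime_pow (Nat.prime_of_mem_primeFactors p.2) e a
  rw [← hprod]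
  simp only [ramanujanSum_prod hq, isMultiplicative_moebius.map_prod_of_pairwise hq]
  rw [sum_filter_coprime_Icc_prod_eq_prod_sum hq fun p => ramanujanSum_natCast_sub_periodic _ a,
    ← prod_mul_distrib]
  exact prod_congr rfl fun p _ => hq_prime_pow p

theorem eval_R_a_pairwise_coprime_general {r : ℕ} (a : Fin r → ℤ) (m : Fin r → ℕ)
    (hcop : ∀ i j, i ≠ j → Nat.Coprime (m i) (m j)) :
    ∑ k ∈ (Icc 1 (∏ i, m i)).filter (fun k => Nat.gcd k (∏ i, m i) = 1),
      ∏ i, ramanujanSum (m i) ((k : ℤ) - a i) =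
    μ (∏ i, m i) * ∏ i, ramanujanSum (m i) (a i) := by
  have hm : Pairwise (Nat.Coprime on m) := fun i j => hcop i j
  rw [sum_filter_coprime_Icc_prod_eq_prod_sum hm fun i => ramanujanSum_natCast_sub_periodic _ (a i),
    isMultiplicative_moebius.map_prod_of_pairwise hm, ← prod_mul_distrib]
  exact prod_congr rfl fun i _ => sum_filter_coprime_ramanujanSum_sub (m i) (a i)

theorem eval_R_a_pairwise_coprime {r : ℕ} (a : Fin r → ℤ) (m : Fin r → ℕ)
    (hm : ∀ i, 0 < m i)
    (hcop : ∀ i j, i ≠ j → Nat.Coprime (m i) (m j)) :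
    ∑ k ∈ (Icc 1 (∏ i, m i)).filter (fun k => Nat.gcd k (∏ i, m i) = 1),
      ∏ i, ramanujanSum (m i) ((k : ℤ) - a i) =
    μ (∏ i, m i) * ∏ i, ramanujanSum (m i) (a i) :=
  eval_R_a_pairwise_coprime_general a m hcop
end
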